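/- Let A be an N×p real matrix with every row nonzero, Γ diagonal positive definite p×p, σ² > 0, and for J ⊆ {1,…,N} let g(J) = tr(A ((1/σ²) Aᵀ P_J A + Γ^{-1})^{-1} Aᵀ). Then for i ∉ J, g(J) - g(J ∪ {i}) = (1/σ²)·‖A D_J^{-1} w_i‖² / (1 + (1/σ²)·w_iᵀ D_J^{-1} w_i), where D_J = (1/σ²) Aᵀ P_J A + Γ^{-1} and w_i = Aᵀ e_i. In particular the marginal decrease depends only on A, Γ, σ², J, i and not on any observed data. -/

import Mathlib

/-!
Adding `i` to `J` changes `D_J` by the rank-one matrix `σ2⁻¹ wᵢ wᵢᵀ`, since `wᵢ` is the `i`-th row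
of `A`. The Sherman–Morrison formula then writes `D_{J∪{i}}⁻¹` as `D_J⁻¹` minus a rank-one
correction, and the trace of `A (x yᵀ) Aᵀ` is `(A x) ⬝ (A y)`. Positive definiteness of `D_J`
makes it invertible and symmetric and keeps the Sherman–Morrison denominator positive.
-/

open Matrix

namespace Matrix

variable {m n : Type*}

theorem inv_add_vecMulVec {K : Type*} [Field K] [Fintype n] [DecidableEq n] {M : Matrix n n K}
    (hM : IsUnit M) (u v : n → K) (h : 1 + v ⬝ᵥ (M⁻¹ *ᵥ u) ≠ 0) :
    (M + vecMulVec u v)⁻¹ =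
      M⁻¹ - (1 + v ⬝ᵥ (M⁻¹ *ᵥ u))⁻¹ • vecMulVec (M⁻¹ *ᵥ u) (v ᵥ* M⁻¹) := by
  refine inv_eq_right_inv ?_
  set s := v ⬝ᵥ (M⁻¹ *ᵥ u)
  have hMinv : M * M⁻¹ = 1 := mul_nonsing_inv M ((isUnit_iff_isUnit_det M).mp hM)
  have hmul_correction : (M + vecMulVec u v) * vecMulVec (M⁻¹ *ᵥ u) (v ᵥ* M⁻¹) =
      (1 + s) • vecMulVec u (v ᵥ* M⁻¹) := by
    rw [add_mul, mul_vecMulVec, mulVec_mulVec, hMinv, one_mulVec, vecMulVec_mul_vecMulVec,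
      vecMulVec_smul, add_smul, one_smul]
  rw [Matrix.mul_sub, Matrix.mul_smul, hmul_correction, smul_smul, inv_mul_cancel₀ h, one_smul,
    Matrix.add_mul, hMinv, vecMulVec_mul, add_sub_cancel_right]

theorem trace_mul_vecMulVec_mul_transpose {R : Type*} [CommSemiring R] [Fintype m] [Fintype n]
    (A : Matrix m n R) (x y : n → R) :
    trace (A * vecMulVec x y * Aᵀ) = (A *ᵥ x) ⬝ᵥ (A *ᵥ y) := by
  rw [mul_vecMulVec, vecMulVec_mul, vecMul_transpose, trace_vecMulVec]

theorem trace_mul_inv_mul_transpose_sub_add_smul_vecMulVec {K : Type*} [Field K] [Fintype m]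
    [Fintype n] [DecidableEq n] (A : Matrix m n K) {M : Matrix n n K} (hM : IsUnit M)
    (hMsymm : M⁻¹.IsSymm) (c : K) (w : n → K) (h : 1 + c * (w ⬝ᵥ (M⁻¹ *ᵥ w)) ≠ 0) :
    trace (A * M⁻¹ * Aᵀ) - trace (A * (M + c • vecMulVec w w)⁻¹ * Aᵀ) =
      c * ((A *ᵥ (M⁻¹ *ᵥ w)) ⬝ᵥ (A *ᵥ (M⁻¹ *ᵥ w))) / (1 + c * (w ⬝ᵥ (M⁻¹ *ᵥ w))) := by
  have hden : 1 + w ⬝ᵥ (M⁻¹ *ᵥ (c • w)) = 1 + c * (w ⬝ᵥ (M⁻¹ *ᵥ w)) := by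
    rw [mulVec_smul, dotProduct_smul, smul_eq_mul]
  have hrow : w ᵥ* M⁻¹ = M⁻¹ *ᵥ w := by rw [← vecMul_transpose, hMsymm.eq]
  rw [← smul_vecMulVec, inv_add_vecMulVec hM _ _ (hden ▸ h), hden, hrow, Matrix.mul_sub,
    Matrix.sub_mul, trace_sub, sub_sub_cancel, Matrix.mul_smul, Matrix.smul_mul, trace_smul,
    trace_mul_vecMulVec_mul_transpose, mulVec_smul, mulVec_smul, smul_dotProduct, smul_eq_mul, smul_eq_mul, div_eq_inv_mul]

theorem transpose_mul_diagonal_indicator_insert_mul {R : Type*} [CommSemiring R] [Fintype m]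
    [DecidableEq m] (A : Matrix m n R) {J : Finset m} {i : m} (hi : i ∉ J) :
    Aᵀ * diagonal (fun j => if j ∈ insert i J then (1 : R) else 0) * A =
      Aᵀ * diagonal (fun j => if j ∈ J then (1 : R) else 0) * A + vecMulVec (A i) (A i) := by
  ext a b
  simp [-Finset.mem_insert, mul_apply, diagonal_apply, Finset.sum_insert hi, add_comm,
    vecMulVec_apply]

theorem posDef_smul_transpose_mul_diagonal_mul_add_inv_diagonal [Fintype m] [DecidableEq m]
    [Fintype n] [DecidableEq n] (A : Matrix m n ℝ) {c : ℝ} (hc : 0 ≤ c) {e : m → ℝ} (he : 0 ≤ e)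
    {d : n → ℝ} (hd : ∀ j, 0 < d j) : (c • (Aᵀ * diagonal e * A) + (diagonal d)⁻¹).PosDef :=
  PosDef.posSemidef_add (by
    simpa using ((PosSemidef.diagonal he).conjTranspose_mul_mul_same A).smul hc)
    (posDef_diagonal_iff.mpr hd).inv

end Matrix

theorem marginal_trace_decrease_general {N p : ℕ}
    (A : Matrix (Fin N) (Fin p) ℝ)
    (d : Fin p → ℝ) (hd : ∀ i, 0 < d i)
    (σ2 : ℝ) (hσ2 : 0 < σ2)
    (D : Finset (Fin N) → Matrix (Fin p) (Fin p) ℝ)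
    (hD : ∀ J, D J =
      (σ2)⁻¹ • (Aᵀ * diagonal (fun j => if j ∈ J then (1 : ℝ) else 0) * A)
        + (diagonal d)⁻¹)
    (g : Finset (Fin N) → ℝ)
    (hg : ∀ J, g J = trace (A * (D J)⁻¹ * Aᵀ))
    (J : Finset (Fin N)) (i : Fin N) (hi : i ∉ J)
    (w : Fin p → ℝ) (hw : w = Aᵀ *ᵥ Pi.single i 1) :
    g J - g (insert i J) =
      (σ2)⁻¹ * ((A *ᵥ ((D J)⁻¹ *ᵥ w)) ⬝ᵥ (A *ᵥ ((D J)⁻¹ *ᵥ w))) /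
        (1 + (σ2)⁻¹ * (w ⬝ᵥ ((D J)⁻¹ *ᵥ w))) := by
  have hwA : w = A i := by
    rw [hw]
    ext
    simp
  have hDJ : (D J).PosDef := hD J ▸ posDef_smul_transpose_mul_diagonal_mul_add_inv_diagonal A
    (inv_nonneg.mpr hσ2.le) (fun j => by positivity) hd
  have hinsert : D (insert i J) = D J + σ2⁻¹ • vecMulVec w w := by
    rw [hD, hD, transpose_mul_diagonal_indicator_insert_mul A hi, smul_add, hwA]
    abel
  have hquad : 0 ≤ w ⬝ᵥ ((D J)⁻¹ *ᵥ w) := by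
    simpa using hDJ.inv.posSemidef.dotProduct_mulVec_nonneg w
  rw [hg, hg, hinsert]
  exact trace_mul_inv_mul_transpose_sub_add_smul_vecMulVec A hDJ.isUnit
    (isHermitian_iff_isSymm.mp hDJ.inv.isHermitian) σ2⁻¹ w (by positivity)

/-- The marginal decrease in the trace of the posterior predictive covariance
when labeling image `i` has the closed form
`(1/σ²)‖A D_J⁻¹ wᵢ‖² / (1 + (1/σ²) wᵢᵀ D_J⁻¹ wᵢ)` and depends only on
`A, Γ, σ², J, i` (not on any observed data). -/
theorem marginal_trace_decrease {N p : ℕ}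
    (A : Matrix (Fin N) (Fin p) ℝ) (hA : ∀ i : Fin N, A i ≠ 0)
    (d : Fin p → ℝ) (hd : ∀ i, 0 < d i)
    (σ2 : ℝ) (hσ2 : 0 < σ2)
    (D : Finset (Fin N) → Matrix (Fin p) (Fin p) ℝ)
    (hD : ∀ J, D J =
      (σ2)⁻¹ • (Aᵀ * diagonal (fun j => if j ∈ J then (1 : ℝ) else 0) * A)
        + (diagonal d)⁻¹)
    (g : Finset (Fin N) → ℝ)
    (hg : ∀ J, g J = trace (A * (D J)⁻¹ * Aᵀ))
    (J : Finset (Fin N)) (i : Fin N) (hi : i ∉ J)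
    (w : Fin p → ℝ) (hw : w = Aᵀ *ᵥ Pi.single i 1) :
    g J - g (insert i J) =
      (σ2)⁻¹ * ((A *ᵥ ((D J)⁻¹ *ᵥ w)) ⬝ᵥ (A *ᵥ ((D J)⁻¹ *ᵥ w))) /
        (1 + (σ2)⁻¹ * (w ⬝ᵥ ((D J)⁻¹ *ᵥ w))) :=
  marginal_trace_decrease_general A d hd σ2 hσ2 D hD g hg J i hi w hw
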